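/- If a kernel k on M satisfies k(hx, hy) = k(x, y) for all h in a group G acting on M and all x, y in M, then for the function F(h) = Σ_{i,j} c_{ij} k(x_i, h^{-1} z_j) with Z = X and c_{ij} = ⟨ℓ(x_i), ℓ(x_j)⟩ (a Gram matrix of an inner product), the identity element e is a global maximum of F over G, i.e., |F(h)| ≤ F(e) for all h ∈ G. -/

import Mathlib

/-!
Both `F 1` and `F h` are values of the RKHS inner product `⟪f, g⟫` between the functions
`f = ∑ ℓᵢ k(xᵢ, ·)` and `g = ∑ ℓⱼ k(h⁻¹xⱼ, ·)`: `F h = ⟪f, g⟫`, `F 1 = ⟪f, f⟫`, and invariance of `k`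
gives `⟪g, g⟫ = ⟪f, f⟫`. Positive definiteness applied to `f ± g` yields
`2 |⟪f, g⟫| ≤ ⟪f, f⟫ + ⟪g, g⟫ = 2 F 1`.
-/

open scoped RealInnerProductSpace

section KernelPairing

variable {M I : Type*} [NormedAddCommGroup I] [InnerProductSpace ℝ I]

/-- The RKHS inner product of `∑ i, a i • k (x i) ·` and `∑ j, b j • k (y j) ·`. -/
def kernelPairing (k : M → M → ℝ) {m n : ℕ} (x : Fin m → M) (a : Fin m → I)
    (y : Fin n → M) (b : Fin n → I) : ℝ :=
  ∑ i, ∑ j, ⟪a i, b j⟫ * k (x i) (y j)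

variable (k : M → M → ℝ) {m m' n n' : ℕ}

theorem kernelPairing_append_left (x : Fin m → M) (a : Fin m → I) (x' : Fin m' → M)
    (a' : Fin m' → I) (y : Fin n → M) (b : Fin n → I) :
    kernelPairing k (Fin.append x x') (Fin.append a a') y b =
      kernelPairing k x a y b + kernelPairing k x' a' y b := by
  simp only [kernelPairing, Fin.sum_univ_add, Fin.append_left, Fin.append_right]

theorem kernelPairing_append_right (x : Fin m → M) (a : Fin m → I) (y : Fin n → M)
    (b : Fin n → I) (y' : Fin n' → M) (b' : Fin n' → I) :
    kernelPairing k x a (Fin.append y y') (Fin.append b b') =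
      kernelPairing k x a y b + kernelPairing k x a y' b' := by
  simp only [kernelPairing, Fin.sum_univ_add, Fin.append_left, Fin.append_right,
    ← Finset.sum_add_distrib]

theorem kernelPairing_smul_left (c : ℝ) (x : Fin m → M) (a : Fin m → I) (y : Fin n → M)
    (b : Fin n → I) :
    kernelPairing k x (c • a) y b = c * kernelPairing k x a y b := by
  simp only [kernelPairing, Pi.smul_apply, real_inner_smul_left, Finset.mul_sum, mul_assoc]

theorem kernelPairing_smul_right (c : ℝ) (x : Fin m → M) (a : Fin m → I) (y : Fin n → M)
    (b : Fin n → I) :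
    kernelPairing k x a y (c • b) = c * kernelPairing k x a y b := by
  simp only [kernelPairing, Pi.smul_apply, real_inner_smul_right, Finset.mul_sum, mul_assoc]

theorem kernelPairing_comm (hsymm : ∀ x y, k x y = k y x) (x : Fin m → M) (a : Fin m → I)
    (y : Fin n → M) (b : Fin n → I) :
    kernelPairing k y b x a = kernelPairing k x a y b := by
  rw [kernelPairing, Finset.sum_comm]
  simp only [kernelPairing, real_inner_comm, hsymm]

theorem kernelPairing_smul_smul {G : Type*} [SMul G M] (g : G)
    (hinv : ∀ x y : M, k (g • x) (g • y) = k x y) (x : Fin m → M) (a : Fin m → I)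
    (y : Fin n → M) (b : Fin n → I) :
    kernelPairing k (g • x) a (g • y) b = kernelPairing k x a y b := by
  simp only [kernelPairing, Pi.smul_apply, hinv]

theorem two_mul_abs_kernelPairing_le (hsymm : ∀ x y, k x y = k y x)
    (hpd : ∀ (m : ℕ) (x : Fin m → M) (a : Fin m → I), 0 ≤ kernelPairing k x a x a)
    (x : Fin m → M) (a : Fin m → I) (y : Fin n → M) (b : Fin n → I) :
    2 * |kernelPairing k x a y b| ≤ kernelPairing k x a x a + kernelPairing k y b y b := by
  have hquadratic : ∀ c : ℝ, 0 ≤ kernelPairing k x a x a + 2 * c * kernelPairing k x a y b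
      + c * c * kernelPairing k y b y b := by
    intro c
    have := hpd _ (Fin.append x y) (Fin.append a (c • b))
    simp only [kernelPairing_append_left, kernelPairing_append_right, kernelPairing_smul_left,
      kernelPairing_smul_right, kernelPairing_comm k hsymm x a y b] at this
    linarith
  have hplus := hquadratic 1
  have hminus := hquadratic (-1)
  norm_num at hplus hminus
  rcases abs_cases (kernelPairing k x a y b) with ⟨habs, -⟩ | ⟨habs, -⟩ <;> linarith

end KernelPairing

/-- If the kernel `k` is invariant under the group action and positive definite
(in the Gram-sum sense), then for `F h = ∑ i j, ⟪ℓ i, ℓ j⟫ * k (X i) (h⁻¹ • X j)`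
the identity is a global maximum: `|F h| ≤ F 1`. -/
theorem identity_is_global_max_of_invariant_kernel
    {G M I : Type*} [Group G] [MulAction G M]
    [NormedAddCommGroup I] [InnerProductSpace ℝ I]
    (k : M → M → ℝ)
    (hsymm : ∀ x y, k x y = k y x)
    (hinv : ∀ (h : G) (x y : M), k (h • x) (h • y) = k x y)
    (hpd : ∀ (m : ℕ) (y : Fin m → M) (a : Fin m → I),
      0 ≤ ∑ i, ∑ j, (⟪a i, a j⟫ : ℝ) * k (y i) (y j))
    (N : ℕ) (X : Fin N → M) (ℓ : Fin N → I)
    (F : G → ℝ)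
    (hF : ∀ h : G, F h = ∑ i, ∑ j, (⟪ℓ i, ℓ j⟫ : ℝ) * k (X i) (h⁻¹ • X j)) :
    ∀ h : G, |F h| ≤ F 1 := by
  intro h
  have hFh : F h = kernelPairing k X ℓ (h⁻¹ • X) ℓ := hF h
  have hF1 : F 1 = kernelPairing k X ℓ X ℓ := by
    rw [hF 1]
    simp only [inv_one, one_smul]
    rfl
  have hdiag : kernelPairing k (h⁻¹ • X) ℓ (h⁻¹ • X) ℓ = F 1 := by
    rw [kernelPairing_smul_smul k h⁻¹ (hinv h⁻¹), hF1]
  have hbound := two_mul_abs_kernelPairing_le k hsymm hpd X ℓ (h⁻¹ • X) ℓ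
  rw [← hFh, ← hF1, hdiag] at hbound
  linarith
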